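/- Let Ω ⊂ ℝ^N be a bounded domain with Lipschitz boundary, β ∈ [0,∞), κ > 0 and m₀ ∈ (−κ, 1) (with m₀ > 0 if β = 0); set c = (1−m₀)/(κ+1). Suppose E* ⊆ Ω is a measurable set with |E*| = c|Ω| that minimizes λ(E) over measurable E ⊆ Ω with 0 < |E| ≤ c|Ω|, and let λ* := λ(E*) > 0. Set μ₋ = −λ*, μ₊ = κλ*, μ₀ = λ*m₀, and μ_{E*} = μ₊·1_{E*} + μ₋·1_{Ω∖E*}. Then μ_{E*} is a solution of the problem inf{ γ(μ) : μ ∈ L^∞(Ω; [μ₋, μ₊]), |{μ > 0}| > 0, ∫_Ω μ dx ≤ −μ₀|Ω| }, and γ(μ_{E*}) = −μ₋ − λ* (= 0). -/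

import Mathlib

open MeasureTheory Set
open scoped Classical ENNReal symmDiff RealInnerProductSpace

noncomputable section

variable {N : ℕ}

/-- The bang-bang weight `m_E = κ·1_E − 1_{Ω∖E}` (extended by `-1` off `E`). -/
def mW (κ : ℝ) (E : Set (EuclideanSpace ℝ (Fin N))) (x : EuclideanSpace ℝ (Fin N)) : ℝ :=
  if x ∈ E then κ else -1

/-- Principal eigenvalue on `Ω` with weight `m` and Robin parameter `β ∈ [0,∞]`
(`β = ⊤` is the Dirichlet case): the infimum of the Rayleigh quotient over smooth
test functions (dense in `H¹(Ω)`, resp. in `H¹₀(Ω)` for `β = ⊤`, where test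
functions vanish on `∂Ω`).  The boundary integral is with respect to the
`(N−1)`-dimensional Hausdorff measure restricted to `∂Ω`. -/
def lamGen (β : ℝ≥0∞) (Ω : Set (EuclideanSpace ℝ (Fin N)))
    (m : EuclideanSpace ℝ (Fin N) → ℝ) : ℝ :=
  sInf { q : ℝ | ∃ φ : EuclideanSpace ℝ (Fin N) → ℝ, ContDiff ℝ (⊤ : ℕ∞) φ ∧
    (β = ⊤ → ∀ x ∈ frontier Ω, φ x = 0) ∧
    0 < (∫ x in Ω, m x * φ x ^ 2) ∧
    q = ((∫ x in Ω, ‖gradient φ x‖ ^ 2) +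
         β.toReal * (∫ x in frontier Ω, φ x ^ 2 ∂(μH[(N : ℝ) - 1]))) /
        (∫ x in Ω, m x * φ x ^ 2) }

/-- Principal eigenvalue `λ(E)` for the bang-bang weight `m_E`. -/
def lam (β : ℝ≥0∞) (κ : ℝ) (Ω E : Set (EuclideanSpace ℝ (Fin N))) : ℝ :=
  lamGen β Ω (mW κ E)

/-- A set is rotationally symmetric about `O` if it is a union of concentric
rings centered at `O`. -/
def RotSym (O : EuclideanSpace ℝ (Fin N)) (A : Set (EuclideanSpace ℝ (Fin N))) : Prop :=
  ∃ S : Set ℝ, A = {x | ‖x - O‖ ∈ S}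

/-- A set has finitely many connected components. -/
def FinComps (A : Set (EuclideanSpace ℝ (Fin N))) : Prop :=
  {C : Set (EuclideanSpace ℝ (Fin N)) | ∃ x ∈ A, C = connectedComponentIn A x}.Finite

/-- `Ω` has a boundary of class `C¹`: locally, `Ω` is a sublevel set and `∂Ω` the zero
level set of a `C¹` function with nonvanishing differential. -/
def HasC1Boundary (Ω : Set (EuclideanSpace ℝ (Fin N))) : Prop :=
  ∀ x ∈ frontier Ω, ∃ (U : Set (EuclideanSpace ℝ (Fin N)))
      (f : EuclideanSpace ℝ (Fin N) → ℝ),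
    IsOpen U ∧ x ∈ U ∧ ContDiff ℝ 1 f ∧ (∀ y ∈ U, fderiv ℝ f y ≠ 0) ∧
    Ω ∩ U = {y ∈ U | f y < 0} ∧ frontier Ω ∩ U = {y ∈ U | f y = 0}

/-- `Ω` has a Lipschitz boundary: locally, in a suitable direction `v`, `Ω` is the
region above the graph of a Lipschitz function which is invariant along `v`. -/
def HasLipschitzBoundary (Ω : Set (EuclideanSpace ℝ (Fin N))) : Prop :=
  ∀ x ∈ frontier Ω, ∃ (U : Set (EuclideanSpace ℝ (Fin N)))
      (v : EuclideanSpace ℝ (Fin N)) (g : EuclideanSpace ℝ (Fin N) → ℝ) (K : NNReal),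
    IsOpen U ∧ x ∈ U ∧ ‖v‖ = 1 ∧ LipschitzWith K g ∧ (∀ (y : EuclideanSpace ℝ (Fin N)) (t : ℝ), g (y + t • v) = g y) ∧
    Ω ∩ U = {y ∈ U | g y < ⟪y, v⟫} ∧ frontier Ω ∩ U = {y ∈ U | ⟪y, v⟫ = g y}

/-- The principal eigenvalue `γ(μ)` of `−Δψ = (μ + γ)ψ` with Robin boundary
conditions, as the infimum of the Rayleigh quotient over smooth test functions
(dense in `H¹(Ω)`); `ψ ≠ 0` in `H¹(Ω)` means `∫_Ω ψ² > 0`. -/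
def gam {N : ℕ} (β : ℝ) (Ω : Set (EuclideanSpace ℝ (Fin N)))
    (μ : EuclideanSpace ℝ (Fin N) → ℝ) : ℝ :=
  sInf { q : ℝ | ∃ ψ : EuclideanSpace ℝ (Fin N) → ℝ, ContDiff ℝ (⊤ : ℕ∞) ψ ∧
    0 < (∫ x in Ω, ψ x ^ 2) ∧
    q = ((∫ x in Ω, ‖gradient ψ x‖ ^ 2) - (∫ x in Ω, μ x * ψ x ^ 2) +
         β * (∫ x in frontier Ω, ψ x ^ 2 ∂(μH[(N : ℝ) - 1]))) /
        (∫ x in Ω, ψ x ^ 2) }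


section AuxiliaryLemmas

open Metric

lemma cont_of_controlled {f g : ℝ → ℝ} {s : Set ℝ} (hg : Continuous g)
    (h : ∀ x ∈ s, ∀ y ∈ s, |f x - f y| ≤ |g x - g y|) : ContinuousOn f s := by
  intro x hx
  rw [ContinuousWithinAt, tendsto_iff_dist_tendsto_zero]
  have hgt : Filter.Tendsto (fun y => dist (g y) (g x)) (nhdsWithin x s) (nhds 0) := by
    have := ((hg.tendsto x).mono_left nhdsWithin_le_nhds).dist
      (tendsto_const_nhds (x := g x) (f := nhdsWithin x s))
    simpa using this
  refine squeeze_zero' ?_ ?_ hgt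
  · exact Filter.Eventually.of_forall fun y => dist_nonneg
  · filter_upwards [self_mem_nhdsWithin] with y hy
    simpa [Real.dist_eq] using h y hy x hx

/-- Exact-measure subset of a bounded measurable set (Sierpiński-type result). -/
lemma exists_subset_volume_eq {N : ℕ} (hN : N ≠ 0) (D : Set (EuclideanSpace ℝ (Fin N)))
    (hD : MeasurableSet D) (hDb : Bornology.IsBounded D) {r : ENNReal} (hr : r ≤ volume D) :
    ∃ G, G ⊆ D ∧ MeasurableSet G ∧ volume G = r := by
  haveI : Nonempty (Fin N) := ⟨⟨0, Nat.pos_of_ne_zero hN⟩⟩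
  have hDfin : volume D < ⊤ := hDb.measure_lt_top
  have hrt : r ≠ ⊤ := (hr.trans_lt hDfin).ne
  obtain ⟨R, hR⟩ := hDb.subset_closedBall 0
  have hR0 : 0 ≤ R ∨ D = ∅ := by
    rcases le_or_gt 0 R with h | h
    · exact Or.inl h
    · right
      have : closedBall (0 : EuclideanSpace ℝ (Fin N)) R = ∅ := closedBall_eq_empty.2 h
      simpa [this, subset_empty_iff] using hR
  rcases hR0 with hR0 | hDe
  swap
  · refine ⟨∅, by simp [hDe], MeasurableSet.empty, ?_⟩
    have : r = 0 := le_antisymm (by simpa [hDe] using hr) (zero_le)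
    simp [this]
  set C : ℝ := (volume (ball (0 : EuclideanSpace ℝ (Fin N)) 1)).toReal with hC
  have hC0 : 0 ≤ C := ENNReal.toReal_nonneg
  set f : ℝ → ℝ := fun ρ => (volume (D ∩ closedBall 0 ρ)).toReal with hf
  set g : ℝ → ℝ := fun ρ => |ρ| ^ N * C with hg
  have hfin : ∀ ρ : ℝ, volume (D ∩ closedBall (0 : EuclideanSpace ℝ (Fin N)) ρ) ≠ ⊤ :=
    fun ρ => ((measure_mono inter_subset_left).trans_lt hDfin).ne
  have hballval : ∀ ρ : ℝ, 0 ≤ ρ →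
      (volume (closedBall (0 : EuclideanSpace ℝ (Fin N)) ρ)).toReal = ρ ^ N * C := by
    intro ρ hρ
    rw [Measure.addHaar_closedBall _ _ hρ, ENNReal.toReal_mul, ENNReal.toReal_ofReal
      (pow_nonneg hρ _), finrank_euclideanSpace_fin]
  have hmono : ∀ a b : ℝ, a ≤ b → f a ≤ f b := fun a b hab =>
    ENNReal.toReal_mono (hfin b)
      (measure_mono (inter_subset_inter_right _ (closedBall_subset_closedBall hab)))
  have hkey : ∀ a b : ℝ, 0 ≤ a → a ≤ b → f b - f a ≤ g b - g a := by
    intro a b ha hab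
    have hb : (0:ℝ) ≤ b := ha.trans hab
    have hsub : D ∩ closedBall 0 b ⊆ (D ∩ closedBall 0 a) ∪
        (closedBall (0:EuclideanSpace ℝ (Fin N)) b \ closedBall 0 a) := by
      intro x hx
      by_cases hxa : x ∈ closedBall (0:EuclideanSpace ℝ (Fin N)) a
      · exact Or.inl ⟨hx.1, hxa⟩
      · exact Or.inr ⟨hx.2, hxa⟩
    have h1 : volume (D ∩ closedBall 0 b) ≤ volume (D ∩ closedBall 0 a) +
        volume (closedBall (0:EuclideanSpace ℝ (Fin N)) b \ closedBall 0 a) :=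
      (measure_mono hsub).trans (measure_union_le _ _)
    have hballfin : ∀ ρ : ℝ, volume (closedBall (0 : EuclideanSpace ℝ (Fin N)) ρ) ≠ ⊤ :=
      fun ρ => measure_closedBall_lt_top.ne
    have h2 : (volume (closedBall (0:EuclideanSpace ℝ (Fin N)) b \ closedBall 0 a)).toReal
        = g b - g a := by
      rw [measure_diff (closedBall_subset_closedBall hab)
        measurableSet_closedBall.nullMeasurableSet (hballfin a),
        ENNReal.toReal_sub_of_le (measure_mono (closedBall_subset_closedBall hab)) (hballfin b),
        hballval a ha, hballval b hb]
      simp [hg, abs_of_nonneg ha, abs_of_nonneg hb]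
    have h3 : f b ≤ f a + (volume (closedBall (0:EuclideanSpace ℝ (Fin N)) b \ closedBall 0 a)).toReal := by
      rw [hf]
      calc (volume (D ∩ closedBall 0 b)).toReal
          ≤ (volume (D ∩ closedBall 0 a) + volume (closedBall (0:EuclideanSpace ℝ (Fin N)) b \ closedBall 0 a)).toReal :=
            ENNReal.toReal_mono (by
              exact ENNReal.add_ne_top.2 ⟨hfin a, ((measure_mono diff_subset).trans_lt measure_closedBall_lt_top).ne⟩) h1
        _ = _ := by
            rw [ENNReal.toReal_add (hfin a) ((measure_mono diff_subset).trans_lt measure_closedBall_lt_top).ne]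
    linarith [h3, h2.ge, h2.le]
  have hgmono : ∀ a b : ℝ, 0 ≤ a → a ≤ b → g a ≤ g b := by
    intro a b ha hab
    have : |a| ^ N ≤ |b| ^ N := by
      rw [abs_of_nonneg ha, abs_of_nonneg (ha.trans hab)]
      exact pow_le_pow_left₀ ha hab N
    exact mul_le_mul_of_nonneg_right this hC0
  have hgcont : Continuous g := by
    rw [hg]; continuity
  have hcont : ContinuousOn f (Icc 0 R) := by
    refine cont_of_controlled (g := g) hgcont ?_
    intro x hx y hy
    rcases le_total x y with h | h
    · rw [abs_of_nonpos (by linarith [hmono x y h]), abs_of_nonpos (by linarith [hgmono x y hx.1 h])]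
      linarith [hkey x y hx.1 h]
    · rw [abs_of_nonneg (by linarith [hmono y x h]), abs_of_nonneg (by linarith [hgmono y x hy.1 h])]
      linarith [hkey y x hy.1 h]
  have hf0 : f 0 = 0 := by
    rw [hf]
    simp only [closedBall_zero]
    have : volume (D ∩ {(0:EuclideanSpace ℝ (Fin N))}) = 0 :=
      measure_mono_null inter_subset_right (measure_singleton _)
    simp [this]
  have hfR : f R = (volume D).toReal := by
    show (volume (D ∩ closedBall 0 R)).toReal = _
    rw [inter_eq_self_of_subset_left hR]
  have hmem : r.toReal ∈ Icc (f 0) (f R) := by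
    constructor
    · rw [hf0]; exact ENNReal.toReal_nonneg
    · rw [hfR]; exact ENNReal.toReal_mono hDfin.ne hr
  obtain ⟨ρ, -, hρ⟩ := intermediate_value_Icc hR0 hcont hmem
  refine ⟨D ∩ closedBall 0 ρ, inter_subset_left, hD.inter measurableSet_closedBall, ?_⟩
  exact (ENNReal.toReal_eq_toReal_iff' (hfin ρ) hrt).1 hρ

/-- The bathtub cut: a measurable subset of `Ω` of any prescribed volume that is a
"level set" of `w` in the sense that `w ≥ t` on it and `w ≤ t` off it. -/
lemma exists_bathtub_cut {N : ℕ} (hN : N ≠ 0) (Ω : Set (EuclideanSpace ℝ (Fin N)))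
    (hΩm : MeasurableSet Ω) (hΩb : Bornology.IsBounded Ω)
    (w : EuclideanSpace ℝ (Fin N) → ℝ) (hw : Continuous w) (hw0 : ∀ x, 0 ≤ w x)
    {r : ENNReal} (hr : r ≤ volume Ω) :
    ∃ F t, MeasurableSet F ∧ F ⊆ Ω ∧ volume F = r ∧ 0 ≤ t ∧
      (∀ x ∈ F, t ≤ w x) ∧ (∀ x ∈ Ω \ F, w x ≤ t) := by
  have hΩfin : volume Ω < ⊤ := hΩb.measure_lt_top
  have hrt : r ≠ ⊤ := (hr.trans_lt hΩfin).ne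
  have hmeasw : Measurable w := hw.measurable
  set Cs : ℝ → Set (EuclideanSpace ℝ (Fin N)) := fun s => Ω ∩ w ⁻¹' (Ioi s) with hCs
  have hCsm : ∀ s, MeasurableSet (Cs s) := fun s => hΩm.inter (hmeasw measurableSet_Ioi)
  have hCsmono : ∀ s s' : ℝ, s ≤ s' → Cs s' ⊆ Cs s :=
    fun s s' hss x hx => ⟨hx.1, lt_of_le_of_lt hss hx.2⟩
  have hCsfin : ∀ s, volume (Cs s) ≠ ⊤ :=
    fun s => ((measure_mono inter_subset_left).trans_lt hΩfin).ne
  set S : Set ℝ := {s : ℝ | 0 ≤ s ∧ volume (Cs s) ≤ r} with hS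
  obtain ⟨M, hM⟩ : ∃ M, ∀ x ∈ closure Ω, ‖w x‖ ≤ M :=
    hΩb.isCompact_closure.exists_bound_of_continuousOn hw.continuousOn
  have hSne : S.Nonempty := by
    refine ⟨max M 0, le_max_right _ _, ?_⟩
    have he : Cs (max M 0) = ∅ := by
      ext x
      simp only [hCs, mem_inter_iff, mem_preimage, mem_Ioi, mem_empty_iff_false, iff_false,
        not_and, not_lt]
      intro hx
      exact (le_abs_self _).trans ((hM x (subset_closure hx)).trans (le_max_left _ _))
    rw [he]; simp
  have hSbdd : BddBelow S := ⟨0, fun s hs => hs.1⟩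
  set t : ℝ := sInf S with htdef
  have ht0 : 0 ≤ t := le_csInf hSne fun s hs => hs.1
  set A : Set (EuclideanSpace ℝ (Fin N)) := Cs t with hA
  set B : Set (EuclideanSpace ℝ (Fin N)) := Ω ∩ w ⁻¹' (Ici t) with hB
  have hAm : MeasurableSet A := hCsm t
  have hBm : MeasurableSet B := hΩm.inter (hmeasw measurableSet_Ici)
  have hAB : A ⊆ B := fun x hx => ⟨hx.1, show t ≤ w x from le_of_lt (show t < w x from hx.2)⟩
  have hBΩ : B ⊆ Ω := fun x hx => hx.1
  have hdiv : ∀ m n : ℕ, m ≤ n → (1:ℝ)/(n+1) ≤ 1/(m+1) := by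
    intro m n h
    apply one_div_le_one_div_of_le (by positivity)
    have : (m:ℝ) ≤ n := Nat.cast_le.2 h
    linarith
  have hvolA : volume A ≤ r := by
    have hAun : A = ⋃ n : ℕ, Cs (t + 1/(n+1)) := by
      ext x
      simp only [hA, hCs, mem_iUnion, mem_inter_iff, mem_preimage, mem_Ioi]
      constructor
      · rintro ⟨hxΩ, hxw⟩
        obtain ⟨n, hn⟩ := exists_nat_one_div_lt (sub_pos.2 hxw)
        exact ⟨n, hxΩ, by linarith⟩
      · rintro ⟨n, hxΩ, hxw⟩
        have h1 : (0:ℝ) < 1/((n:ℝ)+1) := by positivity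
        exact ⟨hxΩ, by linarith⟩
    have hdir : Directed (· ⊆ ·) (fun n : ℕ => Cs (t + 1/(n+1))) := by
      intro m n
      rcases le_total m n with h | h
      · exact ⟨n, hCsmono _ _ (by linarith [hdiv m n h]), subset_rfl⟩
      · exact ⟨m, subset_rfl, hCsmono _ _ (by linarith [hdiv n m h])⟩
    rw [hAun, hdir.measure_iUnion]
    refine iSup_le fun n => ?_
    have h1 : (0:ℝ) < 1/((n:ℝ)+1) := by positivity
    obtain ⟨s, hsS, hst⟩ := exists_lt_of_csInf_lt hSne (show sInf S < t + 1/(n+1) by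
      rw [← htdef]; linarith)
    exact le_trans (measure_mono (hCsmono _ _ hst.le)) hsS.2
  have hvolB : r ≤ volume B := by
    rcases eq_or_lt_of_le ht0 with ht | ht
    · have hBeq : B = Ω := by
        ext x
        simp only [hB, mem_inter_iff, mem_preimage, mem_Ici]
        exact ⟨fun h => h.1, fun h => ⟨h, le_trans ht.symm.le (hw0 x)⟩⟩
      rw [hBeq]; exact hr
    · set sn : ℕ → ℝ := fun n => t - t/(n+2) with hsn
      have hsn0 : ∀ n : ℕ, 0 ≤ sn n := by
        intro n
        have h2 : t/((n:ℝ)+2) ≤ t := div_le_self ht.le (by push_cast; linarith)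
        simp only [hsn]
        linarith
      have hsnlt : ∀ n : ℕ, sn n < t := by
        intro n
        have : (0:ℝ) < t/((n:ℝ)+2) := by positivity
        simp only [hsn]; linarith
      have hCgt : ∀ n : ℕ, r < volume (Cs (sn n)) := by
        intro n
        by_contra h
        have hmem : sn n ∈ S := ⟨hsn0 n, not_lt.1 h⟩
        exact absurd (csInf_le hSbdd hmem) (not_le.2 (hsnlt n))
      have hBint : B = ⋂ n : ℕ, Cs (sn n) := by
        ext x
        simp only [hB, hCs, mem_iInter, mem_inter_iff, mem_preimage, mem_Ici, mem_Ioi]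
        constructor
        · intro ⟨hxΩ, hxw⟩ n
          exact ⟨hxΩ, lt_of_lt_of_le (hsnlt n) hxw⟩
        · intro h
          refine ⟨(h 0).1, ?_⟩
          by_contra hlt
          push_neg at hlt
          obtain ⟨n, hn⟩ := exists_nat_one_div_lt (show (0:ℝ) < (t - w x)/t by
            exact div_pos (by linarith) ht)
          rw [div_lt_div_iff₀ (by positivity) ht] at hn
          have h2 : t/((n:ℝ)+2) < t - w x := by
            rw [div_lt_iff₀ (by positivity)]
            nlinarith [ht]
          have := (h n).2
          simp only [hsn] at this
          linarith
      have hdir : Directed (· ⊇ ·) (fun n : ℕ => Cs (sn n)) := by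
        intro m n
        rcases le_total m n with h | h
        · refine ⟨n, hCsmono _ _ ?_, subset_rfl⟩
          have h2 : t/((n:ℝ)+2) ≤ t/((m:ℝ)+2) := by
            apply div_le_div_of_nonneg_left ht.le (by positivity)
            have : (m:ℝ) ≤ n := Nat.cast_le.2 h
            linarith
          simp only [hsn]; linarith
        · refine ⟨m, subset_rfl, hCsmono _ _ ?_⟩
          have h2 : t/((m:ℝ)+2) ≤ t/((n:ℝ)+2) := by
            apply div_le_div_of_nonneg_left ht.le (by positivity)
            have : (n:ℝ) ≤ m := Nat.cast_le.2 h
            linarith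
          simp only [hsn]; linarith
      rw [hBint, hdir.measure_iInter (fun n => (hCsm _).nullMeasurableSet)
        ⟨0, hCsfin _⟩]
      exact le_iInf fun n => (hCgt n).le
  have hvolAfin : volume A ≠ ⊤ := (hvolA.trans_lt (lt_top_iff_ne_top.2 hrt)).ne
  obtain ⟨G, hGD, hGm, hGvol⟩ := exists_subset_volume_eq hN (B \ A) (hBm.diff hAm)
    (hΩb.subset (diff_subset.trans hBΩ))
    (r := r - volume A) (by
      rw [measure_diff hAB hAm.nullMeasurableSet hvolAfin]
      exact tsub_le_tsub_right hvolB _)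
  refine ⟨A ∪ G, t, hAm.union hGm, union_subset (fun x hx => hx.1) ((hGD.trans diff_subset).trans hBΩ),
    ?_, ht0, ?_, ?_⟩
  · rw [measure_union (disjoint_sdiff_self_right.mono_right hGD) hGm, hGvol]
    exact add_tsub_cancel_of_le hvolA
  · rintro x (hx | hx)
    · exact le_of_lt (show t < w x from hx.2)
    · exact (hGD hx).1.2
  · rintro x ⟨hxΩ, hxF⟩
    by_contra hlt
    exact hxF (Or.inl ⟨hxΩ, show w x ∈ Ioi t from not_le.1 hlt⟩)

lemma intOn_cont {Ω : Set (EuclideanSpace ℝ (Fin N))} (hΩb : Bornology.IsBounded Ω)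
    {f : EuclideanSpace ℝ (Fin N) → ℝ} (hf : Continuous f) : IntegrableOn f Ω := by
  obtain ⟨R, hR⟩ := hΩb.subset_closedBall 0
  exact (hf.continuousOn.integrableOn_compact (isCompact_closedBall _ _)).mono_set hR

lemma intOn_mul_bdd {Ω : Set (EuclideanSpace ℝ (Fin N))} (hΩm : MeasurableSet Ω)
    {p w : EuclideanSpace ℝ (Fin N) → ℝ} (hp : Measurable p) {M : ℝ}
    (hM : ∀ x ∈ Ω, |p x| ≤ M) (hw : IntegrableOn w Ω) :
    IntegrableOn (fun x => p x * w x) Ω := by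
  refine Integrable.mono' (g := fun x => M * |w x|) (hw.norm.const_mul M)
    (hp.aestronglyMeasurable.mul hw.aestronglyMeasurable) ?_
  rw [ae_restrict_iff' hΩm]
  refine Filter.Eventually.of_forall fun x hx => ?_
  rw [norm_mul]
  exact mul_le_mul_of_nonneg_right (hM x hx) (norm_nonneg _)

lemma intOn_bdd {Ω : Set (EuclideanSpace ℝ (Fin N))} (hΩm : MeasurableSet Ω)
    (hΩfin : volume Ω ≠ ⊤) {p : EuclideanSpace ℝ (Fin N) → ℝ} (hp : Measurable p) {M : ℝ}
    (hM : ∀ x ∈ Ω, |p x| ≤ M) : IntegrableOn p Ω := by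
  have := intOn_mul_bdd hΩm hp hM (w := fun _ => (1:ℝ))
    (integrableOn_const_iff (C := (1:ℝ)) |>.2 (Or.inr (lt_top_iff_ne_top.2 hΩfin)))
  simpa using this

lemma measurable_mW (κ : ℝ) {E : Set (EuclideanSpace ℝ (Fin N))}
    (hE : MeasurableSet E) : Measurable (mW κ E) :=
  Measurable.ite hE measurable_const measurable_const

lemma abs_mW_le (κ : ℝ) (hκ : 0 < κ) (E : Set (EuclideanSpace ℝ (Fin N))) (x) :
    |mW κ E x| ≤ max κ 1 := by
  unfold mW
  split
  · rw [abs_of_pos hκ]; exact le_max_left _ _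
  · rw [abs_of_nonpos (by norm_num)]; norm_num

lemma integral_mW {Ω F : Set (EuclideanSpace ℝ (Fin N))} (hΩm : MeasurableSet Ω)
    (hΩfin : volume Ω ≠ ⊤) (hF : MeasurableSet F) (hFΩ : F ⊆ Ω) (κ : ℝ) :
    ∫ x in Ω, mW κ F x = κ * (volume F).toReal
      - ((volume Ω).toReal - (volume F).toReal) := by
  have hFfin : volume F ≠ ⊤ := ((measure_mono hFΩ).trans_lt (lt_top_iff_ne_top.2 hΩfin)).ne
  have hsplit : Ω = F ∪ (Ω \ F) := (union_diff_cancel hFΩ).symm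
  have hint1 : IntegrableOn (mW κ F) F := by
    refine (integrableOn_const_iff (C := κ) |>.2 (Or.inr ?_)).congr_fun
      (fun x hx => (show mW κ F x = κ from if_pos hx).symm) hF
    exact (measure_mono hFΩ).trans_lt (lt_top_iff_ne_top.2 hΩfin)
  have hint2 : IntegrableOn (mW κ F) (Ω \ F) := by
    refine (integrableOn_const_iff (C := (-1:ℝ)) |>.2 (Or.inr ?_)).congr_fun
      (fun x (hx : x ∈ Ω \ F) => (show mW κ F x = -1 from if_neg hx.2).symm) (hΩm.diff hF)
    exact (measure_mono diff_subset).trans_lt (lt_top_iff_ne_top.2 hΩfin)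
  have e1 : ∫ x in F, mW κ F x = κ * (volume F).toReal := by
    rw [setIntegral_congr_fun hF (g := fun _ => (κ:ℝ))
      (fun x hx => show mW κ F x = κ from if_pos hx), setIntegral_const, smul_eq_mul, measureReal_def]
    ring
  have e2 : ∫ x in Ω \ F, mW κ F x = -((volume Ω).toReal - (volume F).toReal) := by
    rw [setIntegral_congr_fun (hΩm.diff hF) (g := fun _ => (-1:ℝ))
      (fun x (hx : x ∈ Ω \ F) => show mW κ F x = -1 from if_neg hx.2), setIntegral_const,
      smul_eq_mul, measureReal_def, measure_diff hFΩ hF.nullMeasurableSet hFfin,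
      ENNReal.toReal_sub_of_le (measure_mono hFΩ) hΩfin]
    ring
  have hiu : (∫ x in Ω, mW κ F x) = (∫ x in F, mW κ F x) + ∫ x in Ω \ F, mW κ F x := by
    conv_lhs => rw [hsplit]
    exact setIntegral_union disjoint_sdiff_self_right (hΩm.diff hF) hint1 hint2
  rw [hiu, e1, e2]
  ring

lemma lamGen_le_of_testfun {β' : ℝ≥0∞} {Ω : Set (EuclideanSpace ℝ (Fin N))}
    {m : EuclideanSpace ℝ (Fin N) → ℝ} (φ : EuclideanSpace ℝ (Fin N) → ℝ)
    (hφ : ContDiff ℝ (⊤ : ℕ∞) φ) (hdir : β' = ⊤ → ∀ x ∈ frontier Ω, φ x = 0)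
    (hD : 0 < ∫ x in Ω, m x * φ x ^ 2) :
    lamGen β' Ω m ≤ ((∫ x in Ω, ‖gradient φ x‖ ^ 2) +
      β'.toReal * (∫ x in frontier Ω, φ x ^ 2 ∂(μH[(N : ℝ) - 1]))) /
      (∫ x in Ω, m x * φ x ^ 2) := by
  refine csInf_le ⟨0, ?_⟩ ⟨φ, hφ, hdir, hD, rfl⟩
  rintro q ⟨ψ, -, -, hDψ, rfl⟩
  refine div_nonneg (add_nonneg ?_ (mul_nonneg ENNReal.toReal_nonneg ?_)) hDψ.le
  · exact integral_nonneg fun x => by positivity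
  · exact integral_nonneg fun x => by positivity

lemma lamGen_nonneg {β' : ℝ≥0∞} {Ω : Set (EuclideanSpace ℝ (Fin N))}
    {m : EuclideanSpace ℝ (Fin N) → ℝ} : 0 ≤ lamGen β' Ω m := by
  refine Real.sInf_nonneg ?_
  rintro q ⟨ψ, -, -, hDψ, rfl⟩
  refine div_nonneg (add_nonneg ?_ (mul_nonneg ENNReal.toReal_nonneg ?_)) hDψ.le
  · exact integral_nonneg fun x => by positivity
  · exact integral_nonneg fun x => by positivity

/-- Part (B): nonnegativity of `γ(μ)` for admissible `μ`, from the minimality of `λ`. -/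
lemma gam_nonneg_aux {Ω : Set (EuclideanSpace ℝ (Fin N))}
    (hΩo : IsOpen Ω) (hΩne : Ω.Nonempty) (hΩb : Bornology.IsBounded Ω) (hN : N ≠ 0)
    {β κ c m₀ lamStar : ℝ} (hβ : 0 ≤ β) (hκ : 0 < κ) (hc0 : 0 < c) (hc1 : c < 1)
    (hck : (κ+1)*c = 1 - m₀) (hpos : 0 < lamStar)
    (hmin : ∀ F : Set (EuclideanSpace ℝ (Fin N)), MeasurableSet F → F ⊆ Ω →
      0 < volume F → volume F ≤ ENNReal.ofReal c * volume Ω →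
      lamStar ≤ lam (ENNReal.ofReal β) κ Ω F)
    (μ : EuclideanSpace ℝ (Fin N) → ℝ) (hμmeas : Measurable μ)
    (hbd : ∀ x ∈ Ω, μ x ∈ Icc (-lamStar) (κ*lamStar))
    (hint : (∫ x in Ω, μ x) ≤ -(lamStar*m₀) * (volume Ω).toReal) :
    0 ≤ gam β Ω μ := by
  have hΩm : MeasurableSet Ω := hΩo.measurableSet
  have hΩfin : volume Ω < ⊤ := hΩb.measure_lt_top
  refine Real.sInf_nonneg ?_
  rintro q ⟨ψ, hψsm, hψpos, rfl⟩
  have hwcont : Continuous fun x => ψ x ^ 2 := (hψsm.continuous).pow 2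
  have hIw : IntegrableOn (fun x => ψ x ^ 2) Ω := intOn_cont hΩb hwcont
  have hrle : ENNReal.ofReal c * volume Ω ≤ volume Ω := by
    calc ENNReal.ofReal c * volume Ω ≤ 1 * volume Ω := by
          gcongr; exact ENNReal.ofReal_le_one.2 hc1.le
    _ = volume Ω := one_mul _
  obtain ⟨F, t, hFm, hFΩ, hFvol, ht0, hFge0, hFle0⟩ :=
    exists_bathtub_cut hN Ω hΩm hΩb (fun x => ψ x ^ 2) hwcont (fun x => sq_nonneg _) hrle
  have hFge : ∀ x ∈ F, t ≤ ψ x ^ 2 := hFge0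
  have hFle : ∀ x ∈ Ω \ F, ψ x ^ 2 ≤ t := hFle0
  have hrpos : 0 < ENNReal.ofReal c * volume Ω :=
    ENNReal.mul_pos (ENNReal.ofReal_pos.2 hc0).ne' (hΩo.measure_pos volume hΩne).ne'
  have hFT : (volume F).toReal = c * (volume Ω).toReal := by
    rw [hFvol, ENNReal.toReal_mul, ENNReal.toReal_ofReal hc0.le]
  -- the function p = μ - λ* m_F  and the pointwise bathtub inequality
  set p : EuclideanSpace ℝ (Fin N) → ℝ := fun x => μ x - lamStar * mW κ F x with hp
  have hpmeas : Measurable p := hμmeas.sub (measurable_const.mul (measurable_mW κ hFm))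
  have hμbd : ∀ x ∈ Ω, |μ x| ≤ κ*lamStar + lamStar := by
    intro x hx
    rw [abs_le]; constructor <;> nlinarith [(hbd x hx).1, (hbd x hx).2]
  have hpbd : ∀ x ∈ Ω, |p x| ≤ (κ*lamStar + lamStar) + lamStar * max κ 1 := by
    intro x hx
    have h3 : |lamStar * mW κ F x| ≤ lamStar * max κ 1 := by
      rw [abs_mul, abs_of_pos hpos]
      exact mul_le_mul_of_nonneg_left (abs_mW_le κ hκ F x) hpos.le
    calc |p x| ≤ |μ x| + |lamStar * mW κ F x| := abs_sub _ _
    _ ≤ _ := add_le_add (hμbd x hx) h3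
  have hpt : ∀ x ∈ Ω, p x * (ψ x ^ 2 - t) ≤ 0 := by
    intro x hx
    rcases Classical.em (x ∈ F) with hxF | hxF
    · have hm : mW κ F x = κ := if_pos hxF
      refine mul_nonpos_iff.mpr (Or.inr ⟨?_, by linarith [hFge x hxF]⟩)
      simp only [hp, hm]; nlinarith [(hbd x hx).2]
    · have hm : mW κ F x = -1 := if_neg hxF
      refine mul_nonpos_iff.mpr (Or.inl ⟨?_, by linarith [hFle x ⟨hx, hxF⟩]⟩)
      simp only [hp, hm]; nlinarith [(hbd x hx).1]
  -- integrability
  have hIp : IntegrableOn p Ω := intOn_bdd hΩm hΩfin.ne hpmeas hpbd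
  have hIμ : IntegrableOn μ Ω := intOn_bdd hΩm hΩfin.ne hμmeas hμbd
  have hImW : IntegrableOn (mW κ F) Ω :=
    intOn_bdd hΩm hΩfin.ne (measurable_mW κ hFm) (fun x _ => abs_mW_le κ hκ F x)
  have hIpw : IntegrableOn (fun x => p x * ψ x ^ 2) Ω := intOn_mul_bdd hΩm hpmeas hpbd hIw
  have hImWw : IntegrableOn (fun x => mW κ F x * ψ x ^ 2) Ω :=
    intOn_mul_bdd hΩm (measurable_mW κ hFm) (fun x _ => abs_mW_le κ hκ F x) hIw
  have hIμw : IntegrableOn (fun x => μ x * ψ x ^ 2) Ω := intOn_mul_bdd hΩm hμmeas hμbd hIw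
  -- the integral inequality
  have hsplit1 : (∫ x in Ω, p x * (ψ x ^ 2 - t)) =
      (∫ x in Ω, p x * ψ x ^ 2) - t * ∫ x in Ω, p x := by
    have he : (fun x => p x * (ψ x ^ 2 - t)) = fun x => p x * ψ x ^ 2 - t * p x := by
      funext x; ring
    rw [he, integral_sub hIpw (hIp.const_mul t), integral_const_mul]
  have hneg : (∫ x in Ω, p x * (ψ x ^ 2 - t)) ≤ 0 := by
    have h := setIntegral_nonneg (μ := volume) hΩm (f := fun x => -(p x * (ψ x ^ 2 - t)))
      (fun x hx => neg_nonneg.2 (hpt x hx))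
    rw [integral_neg] at h
    linarith
  have hintp : (∫ x in Ω, p x) ≤ 0 := by
    have hsub : (∫ x in Ω, p x) = (∫ x in Ω, μ x) - lamStar * ∫ x in Ω, mW κ F x := by
      rw [hp, integral_sub hIμ (hImW.const_mul lamStar), integral_const_mul]
    have hmWint : (∫ x in Ω, mW κ F x) = -(m₀ * (volume Ω).toReal) := by
      rw [integral_mW hΩm hΩfin.ne hFm hFΩ κ, hFT]
      linear_combination (volume Ω).toReal * hck
    rw [hsub, hmWint]
    nlinarith [hint]
  have hJD : (∫ x in Ω, μ x * ψ x ^ 2) ≤ lamStar * ∫ x in Ω, mW κ F x * ψ x ^ 2 := by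
    have hsub : (∫ x in Ω, p x * ψ x ^ 2) =
        (∫ x in Ω, μ x * ψ x ^ 2) - lamStar * ∫ x in Ω, mW κ F x * ψ x ^ 2 := by
      have he : (fun x => p x * ψ x ^ 2) =
          fun x => μ x * ψ x ^ 2 - lamStar * (mW κ F x * ψ x ^ 2) := by
        funext x; simp only [hp]; ring
      rw [he, integral_sub hIμw (hImWw.const_mul lamStar), integral_const_mul]
    have h2 : t * (∫ x in Ω, p x) ≤ 0 := mul_nonpos_iff.mpr (Or.inl ⟨ht0, hintp⟩)
    nlinarith [hsplit1 ▸ hneg]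
  -- conclude using the minimality of lamStar
  have hG0 : 0 ≤ ∫ x in Ω, ‖gradient ψ x‖ ^ 2 := integral_nonneg fun x => by positivity
  have hBd0 : 0 ≤ ∫ x in frontier Ω, ψ x ^ 2 ∂(μH[(N : ℝ) - 1]) :=
    integral_nonneg fun x => by positivity
  have hnum : (∫ x in Ω, μ x * ψ x ^ 2) ≤ (∫ x in Ω, ‖gradient ψ x‖ ^ 2) +
      β * ∫ x in frontier Ω, ψ x ^ 2 ∂(μH[(N : ℝ) - 1]) := by
    have hββ : 0 ≤ β * ∫ x in frontier Ω, ψ x ^ 2 ∂(μH[(N : ℝ) - 1]) :=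
      mul_nonneg hβ hBd0
    rcases le_or_gt (∫ x in Ω, mW κ F x * ψ x ^ 2) 0 with hD0 | hD0
    · nlinarith [hJD]
    · have hlamle := lamGen_le_of_testfun (β' := ENNReal.ofReal β) (Ω := Ω)
        (m := mW κ F) ψ hψsm (fun h => absurd h (by simp)) hD0
      rw [ENNReal.toReal_ofReal hβ] at hlamle
      have hlF : lamStar ≤ lam (ENNReal.ofReal β) κ Ω F :=
        hmin F hFm hFΩ (hFvol ▸ hrpos) hFvol.le
      have hlF2 : lamStar ≤ ((∫ x in Ω, ‖gradient ψ x‖ ^ 2) +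
          β * ∫ x in frontier Ω, ψ x ^ 2 ∂(μH[(N : ℝ) - 1])) /
          (∫ x in Ω, mW κ F x * ψ x ^ 2) := le_trans hlF hlamle
      rw [le_div_iff₀ hD0] at hlF2
      nlinarith [hJD]
  exact div_nonneg (by linarith [hnum]) hψpos.le

end AuxiliaryLemmas

/-- From a minimizer `E*` of the eigenvalue problem `λ(E)` one gets a
solution `μ_{E*} = μ₊·1_{E*} + μ₋·1_{Ω∖E*}` of the equivalent problem for `γ(μ)`, with
parameters `μ₋ = −λ*`, `μ₊ = κλ*`, `μ₀ = λ* m₀`, and `γ(μ_{E*}) = −μ₋ − λ*`. -/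
theorem equivalence_lambda_to_gamma {N : ℕ}
    (Ω : Set (EuclideanSpace ℝ (Fin N))) (hΩo : IsOpen Ω) (hΩc : IsConnected Ω)
    (hΩb : Bornology.IsBounded Ω) (hLip : HasLipschitzBoundary Ω)
    (β : ℝ) (hβ : 0 ≤ β) (κ m₀ : ℝ) (hκ : 0 < κ) (hm₀ : m₀ ∈ Ioo (-κ) 1)
    (hNeu : β = 0 → 0 < m₀)
    (c : ℝ) (hc : c = (1 - m₀) / (κ + 1))
    (E : Set (EuclideanSpace ℝ (Fin N))) (hE : MeasurableSet E) (hEΩ : E ⊆ Ω)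
    (hvol : volume E = ENNReal.ofReal c * volume Ω)
    (hmin : ∀ F : Set (EuclideanSpace ℝ (Fin N)), MeasurableSet F → F ⊆ Ω →
      0 < volume F → volume F ≤ ENNReal.ofReal c * volume Ω →
      lam (ENNReal.ofReal β) κ Ω E ≤ lam (ENNReal.ofReal β) κ Ω F)
    (lamStar : ℝ) (hlamStar : lamStar = lam (ENNReal.ofReal β) κ Ω E)
    (hpos : 0 < lamStar)
    (μm μp μ₀ : ℝ) (hμm : μm = -lamStar) (hμp : μp = κ * lamStar)
    (hμ₀ : μ₀ = lamStar * m₀)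
    (μE : EuclideanSpace ℝ (Fin N) → ℝ)
    (hμE : μE = fun x => if x ∈ E then μp else μm) :
    (∀ μ : EuclideanSpace ℝ (Fin N) → ℝ, Measurable μ →
      (∀ x ∈ Ω, μ x ∈ Icc μm μp) → 0 < volume {x ∈ Ω | 0 < μ x} →
      (∫ x in Ω, μ x) ≤ -μ₀ * (volume Ω).toReal →
      gam β Ω μE ≤ gam β Ω μ) ∧
    gam β Ω μE = -μm - lamStar := by
  subst hμm hμp hμ₀ hμE
  have hΩm : MeasurableSet Ω := hΩo.measurableSet
  have hΩne : Ω.Nonempty := hΩc.nonempty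
  have hΩfin : volume Ω < ⊤ := hΩb.measure_lt_top
  have hΩpos : 0 < volume Ω := hΩo.measure_pos volume hΩne
  have hκ1 : (0:ℝ) < κ + 1 := by linarith
  have hc0 : 0 < c := by
    rw [hc]; exact div_pos (by linarith [hm₀.2]) hκ1
  have hc1 : c < 1 := by
    rw [hc, div_lt_one hκ1]; linarith [hm₀.1]
  have hck : (κ+1)*c = 1 - m₀ := by
    rw [hc]; field_simp
  have hcE : volume E < volume Ω := by
    rw [hvol]
    calc ENNReal.ofReal c * volume Ω < 1 * volume Ω := by
          rw [ENNReal.mul_lt_mul_iff_left hΩpos.ne' hΩfin.ne]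
          exact ENNReal.ofReal_lt_one.2 hc1
    _ = volume Ω := one_mul _
  have hvolEpos : 0 < volume E := by
    rw [hvol]
    exact ENNReal.mul_pos (ENNReal.ofReal_pos.2 hc0).ne' hΩpos.ne'
  have hN : N ≠ 0 := by
    intro h
    subst h
    haveI : Subsingleton (EuclideanSpace ℝ (Fin 0)) :=
      ⟨fun a b => by ext i; exact i.elim0⟩
    obtain ⟨x, hxE⟩ : E.Nonempty := nonempty_of_measure_ne_zero hvolEpos.ne'
    have hΩE : Ω ⊆ E := fun y hy => by
      have hyx : y = x := Subsingleton.elim y x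
      exact hyx ▸ hxE
    exact absurd (measure_mono hΩE) (not_le.2 hcE)
  have hmin' : ∀ F : Set (EuclideanSpace ℝ (Fin N)), MeasurableSet F → F ⊆ Ω →
      0 < volume F → volume F ≤ ENNReal.ofReal c * volume Ω →
      lamStar ≤ lam (ENNReal.ofReal β) κ Ω F := by
    intro F h1 h2 h3 h4
    rw [hlamStar]
    exact hmin F h1 h2 h3 h4
  -- admissibility of μE
  have hμEfun : (fun x => if x ∈ E then κ * lamStar else -lamStar) =
      fun x => lamStar * mW κ E x := by
    funext x
    unfold mW
    split <;> ring
  have hμEmeas : Measurable fun x => if x ∈ E then κ * lamStar else -lamStar :=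
    Measurable.ite hE measurable_const measurable_const
  have hbdE : ∀ x ∈ Ω, (if x ∈ E then κ * lamStar else -lamStar) ∈
      Icc (-lamStar) (κ * lamStar) := by
    intro x _
    split <;> constructor <;> nlinarith
  have hET : (volume E).toReal = c * (volume Ω).toReal := by
    rw [hvol, ENNReal.toReal_mul, ENNReal.toReal_ofReal hc0.le]
  have hμEint : (∫ x in Ω, (if x ∈ E then κ * lamStar else -lamStar)) =
      -(lamStar * m₀) * (volume Ω).toReal := by
    rw [hμEfun, integral_const_mul, integral_mW hΩm hΩfin.ne hE hEΩ κ, hET]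
    linear_combination lamStar * (volume Ω).toReal * hck
  -- Part (B) for μE
  have hBB : 0 ≤ gam β Ω fun x => if x ∈ E then κ * lamStar else -lamStar :=
    gam_nonneg_aux hΩo hΩne hΩb hN hβ hκ hc0 hc1 hck hpos hmin' _
      hμEmeas hbdE hμEint.le
  -- Part (A) : gam μE ≤ 0
  set SL : Set ℝ := { q : ℝ | ∃ φ : EuclideanSpace ℝ (Fin N) → ℝ, ContDiff ℝ (⊤ : ℕ∞) φ ∧
    ((ENNReal.ofReal β) = ⊤ → ∀ x ∈ frontier Ω, φ x = 0) ∧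
    0 < (∫ x in Ω, mW κ E x * φ x ^ 2) ∧
    q = ((∫ x in Ω, ‖gradient φ x‖ ^ 2) +
         (ENNReal.ofReal β).toReal * (∫ x in frontier Ω, φ x ^ 2 ∂(μH[(N : ℝ) - 1]))) /
        (∫ x in Ω, mW κ E x * φ x ^ 2) } with hSL
  have hlamSL : lam (ENNReal.ofReal β) κ Ω E = sInf SL := rfl
  have hSLbdd : BddBelow SL := by
    refine ⟨0, ?_⟩
    rintro q ⟨φ, -, -, hD, rfl⟩
    refine div_nonneg (add_nonneg ?_ (mul_nonneg ENNReal.toReal_nonneg ?_)) hD.le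
    · exact integral_nonneg fun x => by positivity
    · exact integral_nonneg fun x => by positivity
  have hSLne : SL.Nonempty := by
    by_contra h
    rw [Set.not_nonempty_iff_eq_empty] at h
    have h0 : lam (ENNReal.ofReal β) κ Ω E = 0 := by
      rw [hlamSL, h, Real.sInf_empty]
    rw [hlamStar, h0] at hpos
    exact lt_irrefl _ hpos
  have hgambdd : BddBelow { q : ℝ | ∃ ψ : EuclideanSpace ℝ (Fin N) → ℝ, ContDiff ℝ (⊤ : ℕ∞) ψ ∧
      0 < (∫ x in Ω, ψ x ^ 2) ∧
      q = ((∫ x in Ω, ‖gradient ψ x‖ ^ 2) -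
            (∫ x in Ω, (if x ∈ E then κ * lamStar else -lamStar) * ψ x ^ 2) +
           β * (∫ x in frontier Ω, ψ x ^ 2 ∂(μH[(N : ℝ) - 1]))) /
          (∫ x in Ω, ψ x ^ 2) } := by
    refine ⟨-(κ * lamStar), ?_⟩
    rintro q ⟨ψ, hψ, hψpos, rfl⟩
    have hIψ : IntegrableOn (fun x => ψ x ^ 2) Ω := intOn_cont hΩb (hψ.continuous.pow 2)
    have hJle : (∫ x in Ω, (if x ∈ E then κ * lamStar else -lamStar) * ψ x ^ 2)
        ≤ κ * lamStar * ∫ x in Ω, ψ x ^ 2 := by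
      rw [← integral_const_mul]
      refine setIntegral_mono_on ?_ (hIψ.const_mul _) hΩm ?_
      · refine intOn_mul_bdd hΩm hμEmeas (M := κ * lamStar + lamStar) ?_ hIψ
        intro x hx
        have h1 := (hbdE x hx).1
        have h2 := (hbdE x hx).2
        rw [abs_le]
        constructor <;> nlinarith
      · intro x hx
        have := (hbdE x hx).2
        exact mul_le_mul_of_nonneg_right this (sq_nonneg _)
    have hG0 : 0 ≤ ∫ x in Ω, ‖gradient ψ x‖ ^ 2 := integral_nonneg fun x => by positivity
    have hBd0 : 0 ≤ β * ∫ x in frontier Ω, ψ x ^ 2 ∂(μH[(N : ℝ) - 1]) :=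
      mul_nonneg hβ (integral_nonneg fun x => by positivity)
    rw [le_div_iff₀ hψpos]
    nlinarith
  have hA : ∀ ε : ℝ, 0 < ε → gam β Ω (fun x => if x ∈ E then κ * lamStar else -lamStar)
      ≤ κ * ε := by
    intro ε hε
    obtain ⟨q, hqmem, hqlt⟩ := exists_lt_of_csInf_lt hSLne
      (show sInf SL < lamStar + ε by
        rw [← hlamSL, ← hlamStar]; linarith)
    have hqge : lamStar ≤ q := by
      rw [hlamStar, hlamSL]
      exact csInf_le hSLbdd hqmem
    obtain ⟨φ, hφ, -, hDpos, hqeq⟩ := hqmem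
    rw [ENNReal.toReal_ofReal hβ] at hqeq
    have hIφ : IntegrableOn (fun x => φ x ^ 2) Ω := intOn_cont hΩb (hφ.continuous.pow 2)
    have hImWφ : IntegrableOn (fun x => mW κ E x * φ x ^ 2) Ω :=
      intOn_mul_bdd hΩm (measurable_mW κ hE) (fun x _ => abs_mW_le κ hκ E x) hIφ
    have hDle : (∫ x in Ω, mW κ E x * φ x ^ 2) ≤ κ * ∫ x in Ω, φ x ^ 2 := by
      rw [← integral_const_mul]
      refine setIntegral_mono_on hImWφ (hIφ.const_mul _) hΩm ?_
      intro x hx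
      refine mul_le_mul_of_nonneg_right ?_ (sq_nonneg _)
      unfold mW; split
      · exact le_rfl
      · linarith
    have hI2pos : 0 < ∫ x in Ω, φ x ^ 2 := by nlinarith
    have hJE : (∫ x in Ω, (if x ∈ E then κ * lamStar else -lamStar) * φ x ^ 2) =
        lamStar * ∫ x in Ω, mW κ E x * φ x ^ 2 := by
      rw [← integral_const_mul]
      refine integral_congr_ae (Filter.Eventually.of_forall fun x => ?_)
      show (if x ∈ E then κ * lamStar else -lamStar) * φ x ^ 2
        = lamStar * (mW κ E x * φ x ^ 2)
      unfold mW; split <;> ring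
    have hGq : (∫ x in Ω, ‖gradient φ x‖ ^ 2) +
        β * (∫ x in frontier Ω, φ x ^ 2 ∂(μH[(N : ℝ) - 1])) =
        q * ∫ x in Ω, mW κ E x * φ x ^ 2 := by
      rw [hqeq]
      field_simp
    have hmemgam : ((∫ x in Ω, ‖gradient φ x‖ ^ 2) -
            (∫ x in Ω, (if x ∈ E then κ * lamStar else -lamStar) * φ x ^ 2) +
           β * (∫ x in frontier Ω, φ x ^ 2 ∂(μH[(N : ℝ) - 1]))) /
          (∫ x in Ω, φ x ^ 2) ∈ { q : ℝ | ∃ ψ : EuclideanSpace ℝ (Fin N) → ℝ,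
            ContDiff ℝ (⊤ : ℕ∞) ψ ∧ 0 < (∫ x in Ω, ψ x ^ 2) ∧
            q = ((∫ x in Ω, ‖gradient ψ x‖ ^ 2) -
                  (∫ x in Ω, (if x ∈ E then κ * lamStar else -lamStar) * ψ x ^ 2) +
                 β * (∫ x in frontier Ω, ψ x ^ 2 ∂(μH[(N : ℝ) - 1]))) /
                (∫ x in Ω, ψ x ^ 2) } := ⟨φ, hφ, hI2pos, rfl⟩
    have hle1 : gam β Ω (fun x => if x ∈ E then κ * lamStar else -lamStar) ≤
        ((∫ x in Ω, ‖gradient φ x‖ ^ 2) -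
            (∫ x in Ω, (if x ∈ E then κ * lamStar else -lamStar) * φ x ^ 2) +
           β * (∫ x in frontier Ω, φ x ^ 2 ∂(μH[(N : ℝ) - 1]))) /
          (∫ x in Ω, φ x ^ 2) := csInf_le hgambdd hmemgam
    have hval : ((∫ x in Ω, ‖gradient φ x‖ ^ 2) -
            (∫ x in Ω, (if x ∈ E then κ * lamStar else -lamStar) * φ x ^ 2) +
           β * (∫ x in frontier Ω, φ x ^ 2 ∂(μH[(N : ℝ) - 1]))) /
          (∫ x in Ω, φ x ^ 2) ≤ κ * ε := by
      rw [div_le_iff₀ hI2pos, hJE]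
      have hkey : (∫ x in Ω, ‖gradient φ x‖ ^ 2) +
          β * (∫ x in frontier Ω, φ x ^ 2 ∂(μH[(N : ℝ) - 1])) -
          lamStar * (∫ x in Ω, mW κ E x * φ x ^ 2) =
          (q - lamStar) * ∫ x in Ω, mW κ E x * φ x ^ 2 := by
        linear_combination hGq
      nlinarith [mul_le_mul_of_nonneg_left hDle (sub_nonneg.2 hqge),
        mul_lt_mul_of_pos_right (show q - lamStar < ε by linarith) hI2pos, hκ, hε]
    exact hle1.trans hval
  have hAA : gam β Ω (fun x => if x ∈ E then κ * lamStar else -lamStar) ≤ 0 := by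
    refine le_of_forall_pos_le_add fun ε hε => ?_
    have := hA (ε / κ) (by positivity)
    calc gam β Ω (fun x => if x ∈ E then κ * lamStar else -lamStar) ≤ κ * (ε / κ) := this
    _ = ε := by field_simp
    _ ≤ 0 + ε := by linarith
  have hzero : gam β Ω (fun x => if x ∈ E then κ * lamStar else -lamStar) = 0 :=
    le_antisymm hAA hBB
  constructor
  · intro μ hμmeas hbd hvolμ hintμ
    have h2 := gam_nonneg_aux hΩo hΩne hΩb hN hβ hκ hc0 hc1 hck hpos hmin' μ hμmeas hbd hintμ
    rw [hzero]
    exact h2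
  · rw [hzero]; ring
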